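/- arXiv:1609.08396 — 6 statements merged into one kernel-verified Lean document; each statement's English description precedes it below -/
import Mathlib

section
/- A double category C is globularily generated (i.e., generated by its globular 2-morphisms) if and only if C is minimal among double categories with decorated horizontalization equal to H*(C); equivalently, C equals its globularily generated piece γC. -/
/-- Data of a (pseudo)bicategory: 0-cells, 1-cells, 2-cells, identities,
vertical and horizontal composition of 2-cells. -/
structure PreBicat : Type 1 where
  Obj : Type
  Hom : Obj → Obj → Type
  Two : ∀ {a b : Obj}, Hom a b → Hom a b → Type
  id1 : ∀ a : Obj, Hom a a
  comp1 : ∀ {a b c : Obj}, Hom a b → Hom b c → Hom a c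
  id2 : ∀ {a b : Obj} (f : Hom a b), Two f f
  vcomp2 : ∀ {a b : Obj} {f g h : Hom a b}, Two f g → Two g h → Two f h
  hcomp2 : ∀ {a b c : Obj} {f g : Hom a b} {f' g' : Hom b c},
      Two f g → Two f' g' → Two (comp1 f f') (comp1 g g')

/-- Data of a (pseudo) double category: objects, vertical morphisms (forming a
category), horizontal morphisms, 2-morphisms with their boundaries, vertical
and horizontal identities and compositions of 2-morphisms. -/
structure PreDouble : Type 1 where
  Obj : Type
  Ver : Obj → Obj → Type
  Hor : Obj → Obj → Type
  Cell : ∀ {a b c d : Obj}, Hor a b → Hor c d → Ver a c → Ver b d → Type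
  vid : ∀ a, Ver a a
  vcomp : ∀ {a b c}, Ver a b → Ver b c → Ver a c
  hid : ∀ a, Hor a a
  hcomp : ∀ {a b c}, Hor a b → Hor b c → Hor a c
  cid : ∀ {a b} (h : Hor a b), Cell h h (vid a) (vid b)
  hcid : ∀ {a c} (u : Ver a c), Cell (hid a) (hid c) u u
  cvcomp : ∀ {a b c d e f' : Obj} {h : Hor a b} {k : Hor c d} {l : Hor e f'}
      {u : Ver a c} {u' : Ver c e} {v : Ver b d} {v' : Ver d f'},
      Cell h k u v → Cell k l u' v' → Cell h l (vcomp u u') (vcomp v v')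
  chcomp : ∀ {a b c a' b' c' : Obj} {h : Hor a b} {h' : Hor b c} {k : Hor a' b'}
      {k' : Hor b' c'} {u : Ver a a'} {v : Ver b b'} {w : Ver c c'},
      Cell h k u v → Cell h' k' v w → Cell (hcomp h h') (hcomp k k') u w
  vid_comp : ∀ {a b} (u : Ver a b), vcomp (vid a) u = u
  vcomp_vid : ∀ {a b} (u : Ver a b), vcomp u (vid b) = u
  vcomp_assoc : ∀ {a b c d} (u : Ver a b) (v : Ver b c) (w : Ver c d),
      vcomp (vcomp u v) w = vcomp u (vcomp v w)

/-- The horizontal bicategory of a double category: 0-cells are objects,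
1-cells are horizontal morphisms, 2-cells are globular 2-morphisms. -/
def horizontalize (C : PreDouble) : PreBicat where
  Obj := C.Obj
  Hom := C.Hor
  Two h k := C.Cell h k (C.vid _) (C.vid _)
  id1 := C.hid
  comp1 := C.hcomp
  id2 := C.cid
  vcomp2 α β := cast (by rw [C.vid_comp, C.vid_comp]) (C.cvcomp α β)
  hcomp2 α β := C.chcomp α β

/-- Transport of 1-cells along equalities of 0-cells. -/
def transportHom (B : PreBicat) {a b c d : B.Obj} (u : a = c) (v : b = d)
    (k : B.Hom c d) : B.Hom a b := by subst u; subst v; exact k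

/-- The trivial double category on a bicategory: discrete vertical category. -/
def trivialDouble (B : PreBicat) : PreDouble where
  Obj := B.Obj
  Ver a b := PLift (a = b)
  Hor := B.Hom
  Cell h k u v := B.Two h (transportHom B u.down v.down k)
  vid _ := ⟨rfl⟩
  vcomp u v := ⟨u.down.trans v.down⟩
  hid := B.id1
  hcomp := B.comp1
  cid h := B.id2 h
  hcid u := by obtain ⟨e⟩ := u; subst e; exact B.id2 _
  cvcomp {a b c d e f'} {h k l} {u u' v v'} α β := by
    obtain ⟨eu⟩ := u; obtain ⟨eu'⟩ := u'; obtain ⟨ev⟩ := v; obtain ⟨ev'⟩ := v'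
    subst eu; subst eu'; subst ev; subst ev'
    exact B.vcomp2 α β
  chcomp {a b c a' b' c'} {h h' k k'} {u v w} α β := by
    obtain ⟨eu⟩ := u; obtain ⟨ev⟩ := v; obtain ⟨ew⟩ := w
    subst eu; subst ev; subst ew
    exact B.hcomp2 α β
  vid_comp u := by obtain ⟨e⟩ := u; subst e; rfl
  vcomp_vid u := by obtain ⟨e⟩ := u; subst e; rfl
  vcomp_assoc u v w := by
    obtain ⟨e⟩ := u; obtain ⟨e'⟩ := v; obtain ⟨e''⟩ := w
    subst e; subst e'; subst e''; rfl

/-- A (strict) double functor between double categories. -/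
structure DoubleFunctor (C D : PreDouble) : Type where
  obj : C.Obj → D.Obj
  ver : ∀ {a b}, C.Ver a b → D.Ver (obj a) (obj b)
  hor : ∀ {a b}, C.Hor a b → D.Hor (obj a) (obj b)
  cell : ∀ {a b c d} {h : C.Hor a b} {k : C.Hor c d} {u : C.Ver a c} {v : C.Ver b d},
      C.Cell h k u v → D.Cell (hor h) (hor k) (ver u) (ver v)
  ver_id : ∀ a, ver (C.vid a) = D.vid (obj a)
  ver_comp : ∀ {a b c} (u : C.Ver a b) (v : C.Ver b c),
      ver (C.vcomp u v) = D.vcomp (ver u) (ver v)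
  hor_id : ∀ a, hor (C.hid a) = D.hid (obj a)
  hor_comp : ∀ {a b c} (h : C.Hor a b) (k : C.Hor b c),
      hor (C.hcomp h k) = D.hcomp (hor h) (hor k)
  cell_cid : ∀ {a b} (h : C.Hor a b), HEq (cell (C.cid h)) (D.cid (hor h))
  cell_hcid : ∀ {a c} (u : C.Ver a c), HEq (cell (C.hcid u)) (D.hcid (ver u))
  cell_vcomp : ∀ {a b c d e f' : C.Obj} {h : C.Hor a b} {k : C.Hor c d}
      {l : C.Hor e f'} {u : C.Ver a c} {u' : C.Ver c e} {v : C.Ver b d}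
      {v' : C.Ver d f'} (α : C.Cell h k u v) (β : C.Cell k l u' v'),
      HEq (cell (C.cvcomp α β)) (D.cvcomp (cell α) (cell β))
  cell_hcomp : ∀ {a b c a' b' c' : C.Obj} {h : C.Hor a b} {h' : C.Hor b c}
      {k : C.Hor a' b'} {k' : C.Hor b' c'} {u : C.Ver a a'} {v : C.Ver b b'}
      {w : C.Ver c c'} (α : C.Cell h k u v) (β : C.Cell h' k' v w),
      HEq (cell (C.chcomp α β)) (D.chcomp (cell α) (cell β))

/-- The identity double functor. -/
def idDouble (C : PreDouble) : DoubleFunctor C C where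
  obj := id
  ver := fun u => u
  hor := fun h => h
  cell := fun α => α
  ver_id _ := rfl
  ver_comp _ _ := rfl
  hor_id _ := rfl
  hor_comp _ _ := rfl
  cell_cid _ := HEq.rfl
  cell_hcid _ := HEq.rfl
  cell_vcomp _ _ := HEq.rfl
  cell_hcomp _ _ := HEq.rfl

/-- `K` is the composite of the double functors `F` and `G`. -/
def IsCompDouble {C D E : PreDouble} (F : DoubleFunctor C D)
    (G : DoubleFunctor D E) (K : DoubleFunctor C E) : Prop :=
  (∀ a, K.obj a = G.obj (F.obj a)) ∧
  (∀ {a b} (u : C.Ver a b), HEq (K.ver u) (G.ver (F.ver u))) ∧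
  (∀ {a b} (h : C.Hor a b), HEq (K.hor h) (G.hor (F.hor h))) ∧
  (∀ {a b c d} {h : C.Hor a b} {k : C.Hor c d} {u : C.Ver a c} {v : C.Ver b d}
    (α : C.Cell h k u v), HEq (K.cell α) (G.cell (F.cell α)))

/-- A (strict) pseudofunctor between bicategories. -/
structure BicatFunctor (B B' : PreBicat) : Type where
  obj : B.Obj → B'.Obj
  map1 : ∀ {a b}, B.Hom a b → B'.Hom (obj a) (obj b)
  map2 : ∀ {a b} {f g : B.Hom a b}, B.Two f g → B'.Two (map1 f) (map1 g)
  map1_id : ∀ a, map1 (B.id1 a) = B'.id1 (obj a)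
  map1_comp : ∀ {a b c} (f : B.Hom a b) (g : B.Hom b c),
      map1 (B.comp1 f g) = B'.comp1 (map1 f) (map1 g)
  map2_id : ∀ {a b} (f : B.Hom a b), map2 (B.id2 f) = B'.id2 (map1 f)
  map2_vcomp : ∀ {a b} {f g h : B.Hom a b} (α : B.Two f g) (β : B.Two g h),
      map2 (B.vcomp2 α β) = B'.vcomp2 (map2 α) (map2 β)
  map2_hcomp : ∀ {a b c} {f g : B.Hom a b} {f' g' : B.Hom b c}
      (α : B.Two f g) (β : B.Two f' g'),
      HEq (map2 (B.hcomp2 α β)) (B'.hcomp2 (map2 α) (map2 β))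

/-- The identity pseudofunctor. -/
def idBicat (B : PreBicat) : BicatFunctor B B where
  obj := id
  map1 := fun f => f
  map2 := fun α => α
  map1_id _ := rfl
  map1_comp _ _ := rfl
  map2_id _ := rfl
  map2_vcomp _ _ := rfl
  map2_hcomp _ _ := HEq.rfl

/-- `K` is the composite of the pseudofunctors `F` and `G`. -/
def IsCompBicat {B₁ B₂ B₃ : PreBicat} (F : BicatFunctor B₁ B₂)
    (G : BicatFunctor B₂ B₃) (K : BicatFunctor B₁ B₃) : Prop :=
  (∀ a, K.obj a = G.obj (F.obj a)) ∧
  (∀ {a b} (f : B₁.Hom a b), HEq (K.map1 f) (G.map1 (F.map1 f))) ∧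
  (∀ {a b} {f g : B₁.Hom a b} (α : B₁.Two f g), HEq (K.map2 α) (G.map2 (F.map2 α)))

/-- A sub-double category of `C`, given by subsets of objects, vertical
morphisms, horizontal morphisms and 2-morphisms closed under all the
structure of `C`. -/
structure SubDouble (C : PreDouble) : Type where
  objs : Set C.Obj
  vers : ∀ {a b : C.Obj}, Set (C.Ver a b)
  hors : ∀ {a b : C.Obj}, Set (C.Hor a b)
  cells : ∀ {a b c d : C.Obj} {h : C.Hor a b} {k : C.Hor c d} {u : C.Ver a c}
      {v : C.Ver b d}, Set (C.Cell h k u v)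
  ver_src : ∀ {a b} {u : C.Ver a b}, u ∈ vers → a ∈ objs
  ver_tgt : ∀ {a b} {u : C.Ver a b}, u ∈ vers → b ∈ objs
  hor_src : ∀ {a b} {h : C.Hor a b}, h ∈ hors → a ∈ objs
  hor_tgt : ∀ {a b} {h : C.Hor a b}, h ∈ hors → b ∈ objs
  cell_hor_src : ∀ {a b c d} {h : C.Hor a b} {k : C.Hor c d} {u : C.Ver a c}
      {v : C.Ver b d} {α : C.Cell h k u v}, α ∈ cells → h ∈ hors
  cell_hor_tgt : ∀ {a b c d} {h : C.Hor a b} {k : C.Hor c d} {u : C.Ver a c}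
      {v : C.Ver b d} {α : C.Cell h k u v}, α ∈ cells → k ∈ hors
  cell_ver_src : ∀ {a b c d} {h : C.Hor a b} {k : C.Hor c d} {u : C.Ver a c}
      {v : C.Ver b d} {α : C.Cell h k u v}, α ∈ cells → u ∈ vers
  cell_ver_tgt : ∀ {a b c d} {h : C.Hor a b} {k : C.Hor c d} {u : C.Ver a c}
      {v : C.Ver b d} {α : C.Cell h k u v}, α ∈ cells → v ∈ vers
  vid_mem : ∀ {a}, a ∈ objs → C.vid a ∈ vers
  vcomp_mem : ∀ {a b c} {u : C.Ver a b} {v : C.Ver b c},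
      u ∈ vers → v ∈ vers → C.vcomp u v ∈ vers
  hid_mem : ∀ {a}, a ∈ objs → C.hid a ∈ hors
  hcomp_mem : ∀ {a b c} {h : C.Hor a b} {k : C.Hor b c},
      h ∈ hors → k ∈ hors → C.hcomp h k ∈ hors
  cid_mem : ∀ {a b} {h : C.Hor a b}, h ∈ hors → C.cid h ∈ cells
  hcid_mem : ∀ {a c} {u : C.Ver a c}, u ∈ vers → C.hcid u ∈ cells
  cvcomp_mem : ∀ {a b c d e f' : C.Obj} {h : C.Hor a b} {k : C.Hor c d}
      {l : C.Hor e f'} {u : C.Ver a c} {u' : C.Ver c e} {v : C.Ver b d}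
      {v' : C.Ver d f'} {α : C.Cell h k u v} {β : C.Cell k l u' v'},
      α ∈ cells → β ∈ cells → C.cvcomp α β ∈ cells
  chcomp_mem : ∀ {a b c a' b' c' : C.Obj} {h : C.Hor a b} {h' : C.Hor b c}
      {k : C.Hor a' b'} {k' : C.Hor b' c'} {u : C.Ver a a'} {v : C.Ver b b'}
      {w : C.Ver c c'} {α : C.Cell h k u v} {β : C.Cell h' k' v w},
      α ∈ cells → β ∈ cells → C.chcomp α β ∈ cells

/-- A sub-double category is complete if it contains all objects, vertical
morphisms, and horizontal morphisms. -/
def SubDouble.Complete {C : PreDouble} (D : SubDouble C) : Prop :=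
  (∀ a, a ∈ D.objs) ∧ (∀ {a b : C.Obj} (u : C.Ver a b), u ∈ D.vers) ∧
    (∀ {a b : C.Obj} (h : C.Hor a b), h ∈ D.hors)

/-- A sub-double category contains all globular 2-morphisms of `C`. -/
def SubDouble.ContainsGlob {C : PreDouble} (D : SubDouble C) : Prop :=
  ∀ {a b : C.Obj} (h k : C.Hor a b) (α : C.Cell h k (C.vid a) (C.vid b)), α ∈ D.cells

/-- The full (improper) sub-double category of `C`, i.e. `C` itself. -/
def fullSub (C : PreDouble) : SubDouble C where
  objs := Set.univ
  vers := Set.univ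
  hors := Set.univ
  cells := Set.univ
  ver_src _ := trivial
  ver_tgt _ := trivial
  hor_src _ := trivial
  hor_tgt _ := trivial
  cell_hor_src _ := trivial
  cell_hor_tgt _ := trivial
  cell_ver_src _ := trivial
  cell_ver_tgt _ := trivial
  vid_mem _ := trivial
  vcomp_mem _ _ := trivial
  hid_mem _ := trivial
  hcomp_mem _ _ := trivial
  cid_mem _ := trivial
  hcid_mem _ := trivial
  cvcomp_mem _ _ := trivial
  chcomp_mem _ _ := trivial

/-- The globularily generated piece of `C`, as a sub-double category: the
intersection of all complete sub-double categories containing every globular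
2-morphism. -/
def gammaSub (C : PreDouble) : SubDouble C where
  objs := Set.univ
  vers := Set.univ
  hors := Set.univ
  cells := fun {_ _ _ _ _ _ _ _} =>
    {α | ∀ D : SubDouble C, D.Complete → D.ContainsGlob → α ∈ D.cells}
  ver_src _ := trivial
  ver_tgt _ := trivial
  hor_src _ := trivial
  hor_tgt _ := trivial
  cell_hor_src _ := trivial
  cell_hor_tgt _ := trivial
  cell_ver_src _ := trivial
  cell_ver_tgt _ := trivial
  vid_mem _ := trivial
  vcomp_mem _ _ := trivial
  hid_mem _ := trivial
  hcomp_mem _ _ := trivial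
  cid_mem _ := fun D _ hG => hG _ _ _
  hcid_mem _ := fun D hC _ => D.hcid_mem (hC.2.1 _)
  cvcomp_mem hα hβ := fun D hC hG => D.cvcomp_mem (hα D hC hG) (hβ D hC hG)
  chcomp_mem hα hβ := fun D hC hG => D.chcomp_mem (hα D hC hG) (hβ D hC hG)

/-- The decorated horizontalization of a sub-double category of `C`: its
category of objects and vertical morphisms, its horizontal morphisms, and its
globular 2-morphisms. -/
def decHsub (C : PreDouble) (D : SubDouble C) :
    Set C.Obj × (∀ a b : C.Obj, Set (C.Ver a b)) × (∀ a b : C.Obj, Set (C.Hor a b)) ×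
      (∀ (a b : C.Obj) (h k : C.Hor a b), Set (C.Cell h k (C.vid a) (C.vid b))) :=
  (D.objs, fun _ _ => D.vers, fun _ _ => D.hors, fun _ _ _ _ => D.cells)

/-- A double category is globularily generated if it is generated by its
globular 2-morphisms, i.e. its globularily generated piece is all of it. -/
def GloballyGenerated (C : PreDouble) : Prop :=
  ∀ {a b c d : C.Obj} {h : C.Hor a b} {k : C.Hor c d} {u : C.Ver a c}
    {v : C.Ver b d} (α : C.Cell h k u v), α ∈ (gammaSub C).cells

/-- The globularily generated piece of `C`, as a double category in its own
right. -/
def gammaPiece (C : PreDouble) : PreDouble where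
  Obj := C.Obj
  Ver := C.Ver
  Hor := C.Hor
  Cell h k u v := {α : C.Cell h k u v // α ∈ (gammaSub C).cells}
  vid := C.vid
  vcomp := C.vcomp
  hid := C.hid
  hcomp := C.hcomp
  cid h := ⟨C.cid h, (gammaSub C).cid_mem trivial⟩
  hcid u := ⟨C.hcid u, (gammaSub C).hcid_mem trivial⟩
  cvcomp α β := ⟨C.cvcomp α.1 β.1, (gammaSub C).cvcomp_mem α.2 β.2⟩
  chcomp α β := ⟨C.chcomp α.1 β.1, (gammaSub C).chcomp_mem α.2 β.2⟩
  vid_comp := C.vid_comp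
  vcomp_vid := C.vcomp_vid
  vcomp_assoc := C.vcomp_assoc

/-- The inclusion of the globularily generated piece into `C`. -/
def inclusionGamma (C : PreDouble) : DoubleFunctor (gammaPiece C) C where
  obj := id
  ver := fun u => u
  hor := fun h => h
  cell := Subtype.val
  ver_id _ := rfl
  ver_comp _ _ := rfl
  hor_id _ := rfl
  hor_comp _ _ := rfl
  cell_cid _ := HEq.rfl
  cell_hcid _ := HEq.rfl
  cell_vcomp _ _ := HEq.rfl
  cell_hcomp _ _ := HEq.rfl

/-- A 2-morphism is globular if its source and target vertical morphisms are
identities. -/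
def IsGlobular (C : PreDouble) {a b c d : C.Obj} {h : C.Hor a b}
    {k : C.Hor c d} {u : C.Ver a c} {v : C.Ver b d} (_ : C.Cell h k u v) : Prop :=
  ∃ (_ : a = c) (_ : b = d), HEq u (C.vid a) ∧ HEq v (C.vid b)

/-- A 2-morphism is a horizontal identity of a vertical morphism. -/
def IsHorId (C : PreDouble) {a b c d : C.Obj} {h : C.Hor a b}
    {k : C.Hor c d} {u : C.Ver a c} {v : C.Ver b d} (α : C.Cell h k u v) : Prop :=
  ∃ (_ : b = a) (_ : d = c),
    HEq h (C.hid a) ∧ HEq k (C.hid c) ∧ HEq v u ∧ HEq α (C.hcid u)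

/-- A family of 2-morphisms of `C`. -/
abbrev CellFam (C : PreDouble) :=
  ∀ {a b c d : C.Obj} {h : C.Hor a b} {k : C.Hor c d} {u : C.Ver a c}
    {v : C.Ver b d}, C.Cell h k u v → Prop

/-- Closure of a family of 2-morphisms under vertical composition and
identities of the category of morphisms `C₁`. -/
inductive VertGen (C : PreDouble) (X : CellFam C) : CellFam C
  | of {a b c d : C.Obj} {h : C.Hor a b} {k : C.Hor c d} {u : C.Ver a c}
      {v : C.Ver b d} {α : C.Cell h k u v} : X α → VertGen C X α
  | id {a b : C.Obj} (h : C.Hor a b) : VertGen C X (C.cid h)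
  | comp {a b c d e f' : C.Obj} {h : C.Hor a b} {k : C.Hor c d} {l : C.Hor e f'}
      {u : C.Ver a c} {u' : C.Ver c e} {v : C.Ver b d} {v' : C.Ver d f'}
      {α : C.Cell h k u v} {β : C.Cell k l u' v'} :
      VertGen C X α → VertGen C X β → VertGen C X (C.cvcomp α β)

/-- Closure of a family of 2-morphisms under horizontal composition. -/
inductive HorGen (C : PreDouble) (X : CellFam C) : CellFam C
  | of {a b c d : C.Obj} {h : C.Hor a b} {k : C.Hor c d} {u : C.Ver a c}
      {v : C.Ver b d} {α : C.Cell h k u v} : X α → HorGen C X α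
  | comp {a b c a' b' c' : C.Obj} {h : C.Hor a b} {h' : C.Hor b c}
      {k : C.Hor a' b'} {k' : C.Hor b' c'} {u : C.Ver a a'} {v : C.Ver b b'}
      {w : C.Ver c c'} {α : C.Cell h k u v} {β : C.Cell h' k' v w} :
      HorGen C X α → HorGen C X β → HorGen C X (C.chcomp α β)

/-- The auxiliary horizontal families: `Hfam C 0` is `H₁`, the union of the
globular 2-morphisms and the horizontal identities, and `Hfam C (n+1)` is
`H_{n+2}`, the horizontal composites of morphisms of the vertical category
`V_{n+1} = Vfam C n`. -/
def Hfam (C : PreDouble) : ℕ → CellFam C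
  | 0 => fun α => IsGlobular C α ∨ IsHorId C α
  | n + 1 => HorGen C (VertGen C (Hfam C n))

/-- The vertical filtration: `Vfam C n` is the `(n+1)`-st vertical category
`V_{n+1}`, the subcategory of `C₁` generated by `Hfam C n`. -/
def Vfam (C : PreDouble) (n : ℕ) : CellFam C := VertGen C (Hfam C n)

/-- Strictness of a double category, at the level of horizontal composition. -/
def IsStrict (C : PreDouble) : Prop :=
  (∀ {a b} (h : C.Hor a b), C.hcomp (C.hid a) h = h) ∧
  (∀ {a b} (h : C.Hor a b), C.hcomp h (C.hid b) = h) ∧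
  (∀ {a b c d} (h : C.Hor a b) (k : C.Hor b c) (l : C.Hor c d),
    C.hcomp (C.hcomp h k) l = C.hcomp h (C.hcomp k l)) ∧
  (∀ {a b c d a' b' c' d' : C.Obj} {h : C.Hor a b} {h' : C.Hor b c}
    {h'' : C.Hor c d} {k : C.Hor a' b'} {k' : C.Hor b' c'} {k'' : C.Hor c' d'}
    {u : C.Ver a a'} {v : C.Ver b b'} {w : C.Ver c c'} {x : C.Ver d d'}
    (α : C.Cell h k u v) (β : C.Cell h' k' v w) (γ' : C.Cell h'' k'' w x),
    HEq (C.chcomp (C.chcomp α β) γ') (C.chcomp α (C.chcomp β γ'))) ∧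
  (∀ {a b a' b' : C.Obj} {h : C.Hor a b} {k : C.Hor a' b'} {u : C.Ver a a'}
    {v : C.Ver b b'} (α : C.Cell h k u v),
    HEq (C.chcomp (C.hcid u) α) α ∧ HEq (C.chcomp α (C.hcid v)) α)

/-- A double natural transformation between double functors. -/
structure DoubleNat {C D : PreDouble} (F G : DoubleFunctor C D) : Type where
  ver : ∀ a, D.Ver (F.obj a) (G.obj a)
  cell : ∀ {a b} (h : C.Hor a b), D.Cell (F.hor h) (G.hor h) (ver a) (ver b)
  natural : ∀ {a b c d} {h : C.Hor a b} {k : C.Hor c d} {u : C.Ver a c}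
      {v : C.Ver b d} (α : C.Cell h k u v),
      HEq (D.cvcomp (F.cell α) (cell k)) (D.cvcomp (cell h) (G.cell α))

/-- A double natural transformation is globularily generated if all its
2-morphism components lie in the globularily generated piece. -/
def IsGGNat {C D : PreDouble} {F G : DoubleFunctor C D}
    (η : DoubleNat F G) : Prop :=
  ∀ {a b} (h : C.Hor a b), η.cell h ∈ (gammaSub D).cells

/-- `η` is the whiskering of `η'` with the double functor `E`. -/
def IsWhisker {X Y D : PreDouble} (E : DoubleFunctor X Y)
    {F' G' : DoubleFunctor D X} {F G : DoubleFunctor D Y}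
    (η' : DoubleNat F' G') (η : DoubleNat F G) : Prop :=
  (∀ a, HEq (η.ver a) (E.ver (η'.ver a))) ∧
  (∀ {a b} (h : D.Hor a b), HEq (η.cell h) (E.cell (η'.cell h)))

/-- Extensionality for sub-double categories: they are determined by their
four set fields. -/
theorem SubDouble.ext' {C : PreDouble} {D E : SubDouble C}
    (h1 : D.objs = E.objs)
    (h2 : ∀ a b : C.Obj, (D.vers (a := a) (b := b)) = E.vers)
    (h3 : ∀ a b : C.Obj, (D.hors (a := a) (b := b)) = E.hors)
    (h4 : ∀ (a b c d : C.Obj) (h : C.Hor a b) (k : C.Hor c d) (u : C.Ver a c)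
      (v : C.Ver b d), (D.cells (h := h) (k := k) (u := u) (v := v)) = E.cells) :
    D = E := by
  cases D; cases E
  simp only at h1 h2 h3 h4
  congr 1
  · funext a b; exact h2 a b
  · funext a b; exact h3 a b
  · funext a b c d h k u v; exact h4 a b c d h k u v

/-- A double category `C` is globularily generated iff it is
minimal among double categories with decorated horizontalization `H*(C)`;
equivalently, iff `C` equals its globularily generated piece `γC`. -/
theorem globallyGenerated_iff_minimal (C : PreDouble) :
    (GloballyGenerated C ↔
      ∀ D : SubDouble C, decHsub C D = decHsub C (fullSub C) → D = fullSub C) ∧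
    (GloballyGenerated C ↔ gammaSub C = fullSub C) := by
  have hgamma_of_gg : GloballyGenerated C → gammaSub C = fullSub C := by
    intro hGG
    refine SubDouble.ext' rfl (fun _ _ => rfl) (fun _ _ => rfl) ?_
    intro a b c d h k u v
    exact Set.eq_univ_of_forall fun α => hGG α
  have hgg_of_gamma : gammaSub C = fullSub C → GloballyGenerated C := by
    intro he
    intro a b c d h k u v α
    have := congrArg (fun S => @SubDouble.cells C S a b c d h k u v) he
    rw [this]
    trivial
  refine ⟨⟨?_, ?_⟩, hgamma_of_gg, hgg_of_gamma⟩
  · intro hGG D hD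
    -- unpack the equality of decorated horizontalizations
    have hobjs : D.objs = Set.univ := congrArg Prod.fst hD
    have hvers : (fun (a b : C.Obj) => (D.vers (a := a) (b := b))) =
        fun _ _ => Set.univ := congrArg (fun p => p.2.1) hD
    have hhors : (fun (a b : C.Obj) => (D.hors (a := a) (b := b))) =
        fun _ _ => Set.univ := congrArg (fun p => p.2.2.1) hD
    have hcells : (fun (a b : C.Obj) (h k : C.Hor a b) =>
        (D.cells (h := h) (k := k) (u := C.vid a) (v := C.vid b))) =
        fun _ _ _ _ => Set.univ := congrArg (fun p => p.2.2.2) hD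
    have hcomplete : D.Complete := by
      refine ⟨fun a => hobjs ▸ trivial, fun {a b} u => ?_, fun {a b} h => ?_⟩
      · have := congrFun (congrFun hvers a) b; rw [this]; trivial
      · have := congrFun (congrFun hhors a) b; rw [this]; trivial
    have hglob : D.ContainsGlob := by
      intro a b h k α
      have := congrFun (congrFun (congrFun (congrFun hcells a) b) h) k
      rw [this]; trivial
    refine SubDouble.ext' hobjs
      (fun a b => by rw [congrFun (congrFun hvers a) b]; rfl)
      (fun a b => by rw [congrFun (congrFun hhors a) b]; rfl)
      ?_
    intro a b c d h k u v
    exact Set.eq_univ_of_forall fun α => hGG α D hcomplete hglob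
  · intro hmin
    have : gammaSub C = fullSub C := by
      apply hmin
      unfold decHsub
      refine congrArg₂ Prod.mk rfl (congrArg₂ Prod.mk rfl (congrArg₂ Prod.mk rfl ?_))
      funext a b h k
      refine Set.eq_univ_of_forall fun α => ?_
      intro D hC hG
      exact hG h k α
    intro a b c d h k u v α
    exact hgg_of_gamma this α
end

section
/- If F : C → D is a double functor, then the morphism functor F₁ sends globular 2-morphisms of C to globular 2-morphisms of D; hence F restricts to a double functor γF : γC → γD between globularily generated pieces. -/
private lemma mem_transfer {D : PreDouble} {a b c d : D.Obj}
    {h h' : D.Hor a b} {k k' : D.Hor c d}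
    {u u' : D.Ver a c} {v v' : D.Ver b d} (hh : h = h') (hk : k = k')
    (hu : u = u') (hv : v = v')
    {α : D.Cell h k u v} {β : D.Cell h' k' u' v'} (e : HEq α β)
    (hβ : β ∈ (gammaSub D).cells) : α ∈ (gammaSub D).cells := by
  subst hh; subst hk; subst hu; subst hv; cases e; exact hβ

private lemma glob_mem {D : PreDouble} {a b c d : D.Obj} {h : D.Hor a b} {k : D.Hor c d}
    {u : D.Ver a c} {v : D.Ver b d} (ha : a = c) (hb : b = d)
    (hu : HEq u (D.vid a)) (hv : HEq v (D.vid b)) (α : D.Cell h k u v) :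
    α ∈ (gammaSub D).cells := by
  subst ha; subst hb
  cases eq_of_heq hu; cases eq_of_heq hv
  exact fun Ds _ hG => hG _ _ _

/-- The pullback of the globularily generated piece of `D` along `F`. -/
private def pullSub {C D : PreDouble} (F : DoubleFunctor C D) : SubDouble C where
  objs := Set.univ
  vers := Set.univ
  hors := Set.univ
  cells := fun {_ _ _ _ _ _ _ _} => {α | F.cell α ∈ (gammaSub D).cells}
  ver_src _ := trivial
  ver_tgt _ := trivial
  hor_src _ := trivial
  hor_tgt _ := trivial
  cell_hor_src _ := trivial
  cell_hor_tgt _ := trivial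
  cell_ver_src _ := trivial
  cell_ver_tgt _ := trivial
  vid_mem _ := trivial
  vcomp_mem _ _ := trivial
  hid_mem _ := trivial
  hcomp_mem _ _ := trivial
  cid_mem {a b h} _ :=
    mem_transfer rfl rfl (F.ver_id a) (F.ver_id b) (F.cell_cid h)
      ((gammaSub D).cid_mem trivial)
  hcid_mem {a c u} _ :=
    mem_transfer (F.hor_id a) (F.hor_id c) rfl rfl (F.cell_hcid u)
      ((gammaSub D).hcid_mem trivial)
  cvcomp_mem {a b c d e f' h k l u u' v v' α β} hα hβ :=
    mem_transfer rfl rfl (F.ver_comp u u') (F.ver_comp v v') (F.cell_vcomp α β)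
      ((gammaSub D).cvcomp_mem hα hβ)
  chcomp_mem {a b c a' b' c' h h' k k' u v w α β} hα hβ :=
    mem_transfer (F.hor_comp h h') (F.hor_comp k k') rfl rfl (F.cell_hcomp α β)
      ((gammaSub D).chcomp_mem hα hβ)

private lemma pull_mem {C D : PreDouble} (F : DoubleFunctor C D)
    {a b c d : C.Obj} {h : C.Hor a b} {k : C.Hor c d} {u : C.Ver a c}
    {v : C.Ver b d} (α : C.Cell h k u v)
    (hα : α ∈ (gammaSub C).cells) : F.cell α ∈ (gammaSub D).cells := by
  refine hα (pullSub F) ⟨fun _ => trivial, fun _ => trivial, fun _ => trivial⟩ ?_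
  intro a b h k α
  exact glob_mem rfl rfl (heq_of_eq (F.ver_id a)) (heq_of_eq (F.ver_id b)) (F.cell α)

private lemma heq_sub {D : PreDouble} {a b c d : D.Obj}
    {h h' : D.Hor a b} {k k' : D.Hor c d}
    {u u' : D.Ver a c} {v v' : D.Ver b d} (hh : h = h') (hk : k = k')
    (hu : u = u') (hv : v = v')
    {α : D.Cell h k u v} {β : D.Cell h' k' u' v'}
    (hα : α ∈ (gammaSub D).cells) (hβ : β ∈ (gammaSub D).cells)
    (e : HEq α β) :
    HEq (⟨α, hα⟩ : (gammaPiece D).Cell h k u v)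
        (⟨β, hβ⟩ : (gammaPiece D).Cell h' k' u' v') := by
  subst hh; subst hk; subst hu; subst hv; cases e; rfl

/-- A double functor `F : C → D` sends globular 2-morphisms to
globular 2-morphisms, and globularily generated 2-morphisms to globularily
generated ones; hence it restricts to a double functor `γF : γC → γD` between
the globularily generated pieces. -/
theorem doubleFunctor_preserves_globular {C D : PreDouble}
    (F : DoubleFunctor C D) :
    (∀ {a b c d : C.Obj} {h : C.Hor a b} {k : C.Hor c d} {u : C.Ver a c}
      {v : C.Ver b d} (α : C.Cell h k u v),
      IsGlobular C α → IsGlobular D (F.cell α)) ∧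
    (∀ {a b c d : C.Obj} {h : C.Hor a b} {k : C.Hor c d} {u : C.Ver a c}
      {v : C.Ver b d} (α : C.Cell h k u v),
      α ∈ (gammaSub C).cells → F.cell α ∈ (gammaSub D).cells) ∧
    (∃ Fγ : DoubleFunctor (gammaPiece C) (gammaPiece D),
      Fγ.obj = F.obj ∧
      (∀ {a b : C.Obj} (u : C.Ver a b), HEq (Fγ.ver u) (F.ver u)) ∧
      (∀ {a b : C.Obj} (h : C.Hor a b), HEq (Fγ.hor h) (F.hor h)) ∧
      (∀ {a b c d : C.Obj} {h : C.Hor a b} {k : C.Hor c d} {u : C.Ver a c}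
        {v : C.Ver b d} (α : (gammaPiece C).Cell h k u v),
        HEq (Fγ.cell α).val (F.cell α.val))) := by
  refine ⟨?_, fun α hα => pull_mem F α hα, ?_⟩
  · rintro a b c d h k u v α ⟨ha, hb, hu, hv⟩
    subst ha; subst hb
    cases eq_of_heq hu; cases eq_of_heq hv
    exact ⟨rfl, rfl, heq_of_eq (F.ver_id a), heq_of_eq (F.ver_id b)⟩
  · refine ⟨{
      obj := F.obj
      ver := F.ver
      hor := F.hor
      cell := fun α => ⟨F.cell α.1, pull_mem F α.1 α.2⟩
      ver_id := F.ver_id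
      ver_comp := F.ver_comp
      hor_id := F.hor_id
      hor_comp := F.hor_comp
      cell_cid := fun h =>
        heq_sub rfl rfl (F.ver_id _) (F.ver_id _) _ _ (F.cell_cid h)
      cell_hcid := fun u =>
        heq_sub (F.hor_id _) (F.hor_id _) rfl rfl _ _ (F.cell_hcid u)
      cell_vcomp := fun α β =>
        heq_sub rfl rfl (F.ver_comp _ _) (F.ver_comp _ _) _ _ (F.cell_vcomp α.1 β.1)
      cell_hcomp := fun α β =>
        heq_sub (F.hor_comp _ _) (F.hor_comp _ _) rfl rfl _ _ (F.cell_hcomp α.1 β.1)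
    }, rfl, fun _ => HEq.rfl, fun _ => HEq.rfl, fun _ => HEq.rfl⟩
end

section
/- If C is a globularily generated double category, then the morphism category C₁ of C is the union (colimit in Cat along the inclusions) of the increasing sequence of vertical categories V_n^C; that is, every 2-morphism of C lies in V_n^C for some n. -/
/-- `Vfam` is monotone: every `V_n` is contained in `V_{n+1}`. -/
lemma Vfam_succ_of (C : PreDouble) (n : ℕ) {a b c d : C.Obj} {h : C.Hor a b}
    {k : C.Hor c d} {u : C.Ver a c} {v : C.Ver b d} {α : C.Cell h k u v}
    (hα : Vfam C n α) : Vfam C (n + 1) α :=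
  VertGen.of (X := Hfam C (n + 1)) (HorGen.of hα)

lemma Vfam_mono (C : PreDouble) {n m : ℕ} (hnm : n ≤ m) {a b c d : C.Obj}
    {h : C.Hor a b} {k : C.Hor c d} {u : C.Ver a c} {v : C.Ver b d}
    {α : C.Cell h k u v} (hα : Vfam C n α) : Vfam C m α := by
  induction hnm with
  | refl => exact hα
  | step _ ih => exact Vfam_succ_of C _ ih

/-- The sub-double category of cells lying in some `V_n`. -/
def unionSub (C : PreDouble) : SubDouble C where
  objs := Set.univ
  vers := Set.univ
  hors := Set.univ
  cells := fun {_ _ _ _ _ _ _ _} => {α | ∃ n, Vfam C n α}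
  ver_src _ := trivial
  ver_tgt _ := trivial
  hor_src _ := trivial
  hor_tgt _ := trivial
  cell_hor_src _ := trivial
  cell_hor_tgt _ := trivial
  cell_ver_src _ := trivial
  cell_ver_tgt _ := trivial
  vid_mem _ := trivial
  vcomp_mem _ _ := trivial
  hid_mem _ := trivial
  hcomp_mem _ _ := trivial
  cid_mem _ := ⟨0, VertGen.id _⟩
  hcid_mem {a c u} _ :=
    ⟨0, VertGen.of (Or.inr ⟨rfl, rfl, HEq.rfl, HEq.rfl, HEq.rfl, HEq.rfl⟩)⟩
  cvcomp_mem := by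
    rintro _ _ _ _ _ _ _ _ _ _ _ _ _ α β ⟨n, hα⟩ ⟨m, hβ⟩
    exact ⟨max n m, VertGen.comp (Vfam_mono C (le_max_left n m) hα)
      (Vfam_mono C (le_max_right n m) hβ)⟩
  chcomp_mem := by
    rintro _ _ _ _ _ _ _ _ _ _ _ _ _ α β ⟨n, hα⟩ ⟨m, hβ⟩
    exact ⟨max n m + 1, VertGen.of (HorGen.comp
      (HorGen.of (Vfam_mono C (le_max_left n m) hα))
      (HorGen.of (Vfam_mono C (le_max_right n m) hβ)))⟩

/-- If `C` is globularily generated, then the morphism category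
`C₁` of `C` is the union of the increasing sequence of vertical categories:
every 2-morphism of `C` lies in some `V_n^C`. -/
theorem morphism_category_eq_union_vertical (C : PreDouble)
    (hC : GloballyGenerated C) :
    ∀ {a b c d : C.Obj} {h : C.Hor a b} {k : C.Hor c d} {u : C.Ver a c}
      {v : C.Ver b d} (α : C.Cell h k u v), ∃ n : ℕ, Vfam C n α := by
  intro a b c d h k u v α
  exact hC α (unionSub C) ⟨fun _ => trivial, fun _ => trivial, fun _ => trivial⟩
    (fun h k β => ⟨0, VertGen.of (Or.inl ⟨rfl, rfl, HEq.rfl, HEq.rfl⟩)⟩)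
end

section
/- In a globularily generated double category C, every 2-morphism that is not globular is a horizontal endomorphism, i.e., its source vertical morphism equals its target vertical morphism. -/
/-- Auxiliary sub-double category: cells that are globular or horizontal
endomorphisms. -/
def endoSub (C : PreDouble) : SubDouble C where
  objs := Set.univ
  vers := Set.univ
  hors := Set.univ
  cells := fun {a b c d _ _ u v} =>
    {_α | IsGlobular C _α ∨ ∃ (_ : a = b) (_ : c = d), HEq u v}
  ver_src _ := trivial
  ver_tgt _ := trivial
  hor_src _ := trivial
  hor_tgt _ := trivial
  cell_hor_src _ := trivial
  cell_hor_tgt _ := trivial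
  cell_ver_src _ := trivial
  cell_ver_tgt _ := trivial
  vid_mem _ := trivial
  vcomp_mem _ _ := trivial
  hid_mem _ := trivial
  hcomp_mem _ _ := trivial
  cid_mem _ := Or.inl ⟨rfl, rfl, HEq.rfl, HEq.rfl⟩
  hcid_mem _ := Or.inr ⟨rfl, rfl, HEq.rfl⟩
  cvcomp_mem := by
    rintro a b c d e f' h k l u u' v v' α β
        (⟨rfl, rfl, hu, hv⟩ | ⟨rfl, rfl, huv⟩) hβ
    · -- α globular
      obtain rfl := eq_of_heq hu
      obtain rfl := eq_of_heq hv
      rcases hβ with ⟨rfl, rfl, hu', hv'⟩ | ⟨rfl, rfl, huv'⟩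
      · obtain rfl := eq_of_heq hu'
        obtain rfl := eq_of_heq hv'
        exact Or.inl ⟨rfl, rfl, heq_of_eq (C.vid_comp _), heq_of_eq (C.vid_comp _)⟩
      · obtain rfl := eq_of_heq huv'
        exact Or.inr ⟨rfl, rfl, HEq.rfl⟩
    · -- α endo
      obtain rfl := eq_of_heq huv
      rcases hβ with ⟨rfl, rfl, hu', hv'⟩ | ⟨-, rfl, huv'⟩
      · obtain rfl := eq_of_heq hu'
        obtain rfl := eq_of_heq hv'
        exact Or.inr ⟨rfl, rfl, HEq.rfl⟩
      · obtain rfl := eq_of_heq huv'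
        exact Or.inr ⟨rfl, rfl, HEq.rfl⟩
  chcomp_mem := by
    rintro a b c a' b' c' h h' k k' u v w α β
        (⟨rfl, rfl, hu, hv⟩ | ⟨rfl, rfl, huv⟩) hβ
    · -- α globular: a = a', b = b', u = vid a, v = vid b
      obtain rfl := eq_of_heq hu
      obtain rfl := eq_of_heq hv
      rcases hβ with ⟨-, rfl, hv', hw⟩ | ⟨rfl, rfl, hvw⟩
      · obtain rfl := eq_of_heq hw
        exact Or.inl ⟨rfl, rfl, HEq.rfl, HEq.rfl⟩
      · obtain rfl := eq_of_heq hvw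
        exact Or.inl ⟨rfl, rfl, HEq.rfl, HEq.rfl⟩
    · -- α endo: a = b, a' = b', u = v
      obtain rfl := eq_of_heq huv
      rcases hβ with ⟨rfl, rfl, hv', hw⟩ | ⟨rfl, rfl, hvw⟩
      · obtain rfl := eq_of_heq hv'
        obtain rfl := eq_of_heq hw
        exact Or.inl ⟨rfl, rfl, HEq.rfl, HEq.rfl⟩
      · obtain rfl := eq_of_heq hvw
        exact Or.inr ⟨rfl, rfl, HEq.rfl⟩

theorem endoSub_complete (C : PreDouble) : (endoSub C).Complete :=
  ⟨fun _ => trivial, fun _ => trivial, fun _ => trivial⟩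

theorem endoSub_containsGlob (C : PreDouble) : (endoSub C).ContainsGlob :=
  fun _ _ _ => Or.inl ⟨rfl, rfl, HEq.rfl, HEq.rfl⟩

/-- In a globularily generated double category, every
non-globular 2-morphism is a horizontal endomorphism: its source vertical
morphism equals its target vertical morphism. -/
theorem nonglobular_is_horizontal_endomorphism (C : PreDouble)
    (hC : GloballyGenerated C) :
    ∀ {a b c d : C.Obj} {h : C.Hor a b} {k : C.Hor c d} {u : C.Ver a c}
      {v : C.Ver b d} (α : C.Cell h k u v),
      ¬ IsGlobular C α → ∃ (_ : a = b) (_ : c = d), HEq u v := by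
  intro a b c d h k u v α hng
  rcases hC α (endoSub C) (endoSub_complete C) (endoSub_containsGlob C) with hg | he
  · exact absurd hg hng
  · exact he
end

section
/- In a globularily generated double category C, a horizontal composite Ψ ∗ Φ of two horizontally composable 2-morphisms is globular if and only if both Φ and Ψ are globular. -/
/-- A vertical morphism is an identity. -/
def VIsId (C : PreDouble) {a b : C.Obj} (u : C.Ver a b) : Prop :=
  ∃ (_ : a = b), HEq u (C.vid a)

/-- The boundary invariant: two vertical morphisms are HEq-equal, or both
are identities. -/
def BQ (C : PreDouble) {a b c d : C.Obj} (u : C.Ver a c) (v : C.Ver b d) : Prop :=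
  (∃ (_ : a = b) (_ : c = d), HEq u v) ∨ (VIsId C u ∧ VIsId C v)

theorem BQ_trans (C : PreDouble) {a b c a' b' c' : C.Obj}
    {u : C.Ver a a'} {v : C.Ver b b'} {w : C.Ver c c'}
    (h1 : BQ C u v) (h2 : BQ C v w) : BQ C u w := by
  rcases h1 with ⟨rfl, rfl, hu⟩ | ⟨hu, hv⟩
  · obtain rfl := eq_of_heq hu
    exact h2
  · rcases h2 with ⟨rfl, rfl, hvw⟩ | ⟨_, hw⟩
    · obtain rfl := eq_of_heq hvw
      exact Or.inr ⟨hu, hv⟩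
    · exact Or.inr ⟨hu, hw⟩

theorem BQ_vcomp (C : PreDouble) {a b c d e f : C.Obj}
    {u : C.Ver a c} {v : C.Ver b d} {u' : C.Ver c e} {v' : C.Ver d f}
    (h1 : BQ C u v) (h2 : BQ C u' v') : BQ C (C.vcomp u u') (C.vcomp v v') := by
  rcases h1 with ⟨rfl, rfl, hu⟩ | ⟨⟨rfl, hu⟩, ⟨rfl, hv⟩⟩
  · obtain rfl := eq_of_heq hu
    rcases h2 with ⟨-, rfl, hu'⟩ | ⟨⟨rfl, hu'⟩, ⟨rfl, hv'⟩⟩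
    · obtain rfl := eq_of_heq hu'
      exact Or.inl ⟨rfl, rfl, HEq.rfl⟩
    · obtain rfl := eq_of_heq hu'
      obtain rfl := eq_of_heq hv'
      exact Or.inl ⟨rfl, rfl, HEq.rfl⟩
  · obtain rfl := eq_of_heq hu
    obtain rfl := eq_of_heq hv
    rcases h2 with ⟨rfl, rfl, hu'⟩ | ⟨⟨rfl, hu'⟩, ⟨rfl, hv'⟩⟩
    · obtain rfl := eq_of_heq hu'
      exact Or.inl ⟨rfl, rfl, HEq.rfl⟩
    · obtain rfl := eq_of_heq hu'
      obtain rfl := eq_of_heq hv'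
      exact Or.inr ⟨⟨rfl, heq_of_eq (C.vid_comp _)⟩, ⟨rfl, heq_of_eq (C.vid_comp _)⟩⟩

/-- The complete sub-double category of 2-morphisms satisfying the boundary
invariant. -/
def bqSub (C : PreDouble) : SubDouble C where
  objs := Set.univ
  vers := Set.univ
  hors := Set.univ
  cells := fun {_ _ _ _ _ _ u v} => {_α | BQ C u v}
  ver_src _ := trivial
  ver_tgt _ := trivial
  hor_src _ := trivial
  hor_tgt _ := trivial
  cell_hor_src _ := trivial
  cell_hor_tgt _ := trivial
  cell_ver_src _ := trivial
  cell_ver_tgt _ := trivial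
  vid_mem _ := trivial
  vcomp_mem _ _ := trivial
  hid_mem _ := trivial
  hcomp_mem _ _ := trivial
  cid_mem _ := Or.inr ⟨⟨rfl, HEq.rfl⟩, ⟨rfl, HEq.rfl⟩⟩
  hcid_mem _ := Or.inl ⟨rfl, rfl, HEq.rfl⟩
  cvcomp_mem hα hβ := BQ_vcomp C hα hβ
  chcomp_mem hα hβ := BQ_trans C hα hβ

theorem bq_of_gamma (C : PreDouble) {a b c d : C.Obj} {h : C.Hor a b}
    {k : C.Hor c d} {u : C.Ver a c} {v : C.Ver b d} {α : C.Cell h k u v}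
    (hα : α ∈ (gammaSub C).cells) : BQ C u v :=
  hα (bqSub C) ⟨fun _ => trivial, fun _ => trivial, fun _ => trivial⟩
    (fun _ _ _ => Or.inr ⟨⟨rfl, HEq.rfl⟩, ⟨rfl, HEq.rfl⟩⟩)

theorem BQ_id_left (C : PreDouble) {a b c d : C.Obj} {u : C.Ver a c}
    {v : C.Ver b d} (h : BQ C u v) (hu : VIsId C u) : VIsId C v := by
  rcases h with ⟨rfl, rfl, huv⟩ | ⟨_, hv⟩
  · obtain ⟨rfl, hu'⟩ := hu
    exact ⟨rfl, (heq_of_eq (eq_of_heq huv).symm).trans hu'⟩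
  · exact hv

theorem BQ_id_right (C : PreDouble) {a b c d : C.Obj} {u : C.Ver a c}
    {v : C.Ver b d} (h : BQ C u v) (hv : VIsId C v) : VIsId C u := by
  rcases h with ⟨rfl, rfl, huv⟩ | ⟨hu, _⟩
  · obtain ⟨rfl, hv'⟩ := hv
    exact ⟨rfl, (heq_of_eq (eq_of_heq huv)).trans hv'⟩
  · exact hu

/-- In a globularily generated double category, a horizontal
composite of 2-morphisms is globular iff both factors are globular. -/
theorem hcomp_globular_iff (C : PreDouble) (hC : GloballyGenerated C) :
    ∀ {a b c a' b' c' : C.Obj} {h : C.Hor a b} {h' : C.Hor b c}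
      {k : C.Hor a' b'} {k' : C.Hor b' c'} {u : C.Ver a a'} {v : C.Ver b b'}
      {w : C.Ver c c'} (α : C.Cell h k u v) (β : C.Cell h' k' v w),
      IsGlobular C (C.chcomp α β) ↔ IsGlobular C α ∧ IsGlobular C β := by
  intro a b c a' b' c' h h' k k' u v w α β
  constructor
  · rintro ⟨rfl, rfl, hu, hw⟩
    have huv : BQ C u v := bq_of_gamma C (hC α)
    have hvw : BQ C v w := bq_of_gamma C (hC β)
    have hv : VIsId C v := BQ_id_left C huv ⟨rfl, hu⟩
    obtain ⟨rfl, hv'⟩ := hv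
    exact ⟨⟨rfl, rfl, hu, hv'⟩, ⟨rfl, rfl, hv', hw⟩⟩
  · rintro ⟨⟨rfl, rfl, hu, hv⟩, ⟨_, rfl, hv', hw⟩⟩
    exact ⟨rfl, rfl, hu, hw⟩
end

section
/- Let F : C → D be a double functor between globularily generated double categories. Then for every n ≥ 1, the morphism functor F₁ maps the n-th vertical category V_n^C into V_n^D; if moreover C, D, and F are strict, then F₁ maps the n-th horizontal category H_n^C into H_n^D. -/
/-- Transport membership in a cell family along boundary equalities and a HEq. -/
lemma cellFam_cast {D : PreDouble} (P : CellFam D) {a b c d : D.Obj}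
    {h h' : D.Hor a b} {k k' : D.Hor c d} {u u' : D.Ver a c} {v v' : D.Ver b d}
    (eh : h = h') (ek : k = k') (eu : u = u') (ev : v = v')
    {α : D.Cell h k u v} {β : D.Cell h' k' u' v'} (e : HEq α β) (hp : P α) :
    P β := by
  subst eh; subst ek; subst eu; subst ev
  exact (eq_of_heq e) ▸ hp

lemma hfam_zero_pres {C D : PreDouble} (F : DoubleFunctor C D)
    {a b c d : C.Obj} {h : C.Hor a b} {k : C.Hor c d} {u : C.Ver a c}
    {v : C.Ver b d} (α : C.Cell h k u v) (hα : Hfam C 0 α) :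
    Hfam D 0 (F.cell α) := by
  rcases hα with ⟨eac, ebd, hu, hv⟩ | ⟨eba, edc, hh, hk, hv, he⟩
  · subst eac; subst ebd
    obtain rfl := eq_of_heq hu; obtain rfl := eq_of_heq hv
    exact Or.inl ⟨rfl, rfl, heq_of_eq (F.ver_id a), heq_of_eq (F.ver_id b)⟩
  · subst eba; subst edc
    obtain rfl := eq_of_heq hh; obtain rfl := eq_of_heq hk
    obtain rfl := eq_of_heq hv; obtain rfl := eq_of_heq he
    exact Or.inr ⟨rfl, rfl, heq_of_eq (F.hor_id _), heq_of_eq (F.hor_id _),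
      HEq.rfl, F.cell_hcid _⟩

lemma vertGen_pres {C D : PreDouble} (F : DoubleFunctor C D)
    (X : CellFam C) (Y : CellFam D)
    (hXY : ∀ {a b c d : C.Obj} {h : C.Hor a b} {k : C.Hor c d} {u : C.Ver a c}
      {v : C.Ver b d} (α : C.Cell h k u v), X α → Y (F.cell α))
    {a b c d : C.Obj} {h : C.Hor a b} {k : C.Hor c d} {u : C.Ver a c}
    {v : C.Ver b d} {α : C.Cell h k u v} (hα : VertGen C X α) :
    VertGen D Y (F.cell α) := by
  induction hα with
  | of hx => exact VertGen.of (hXY _ hx)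
  | id h =>
    exact cellFam_cast (VertGen D Y) rfl rfl (F.ver_id _).symm (F.ver_id _).symm
      (F.cell_cid h).symm (VertGen.id (F.hor h))
  | comp hα hβ ihα ihβ =>
    exact cellFam_cast (VertGen D Y) rfl rfl (F.ver_comp _ _).symm
      (F.ver_comp _ _).symm (F.cell_vcomp _ _).symm (VertGen.comp ihα ihβ)

lemma horGen_pres {C D : PreDouble} (F : DoubleFunctor C D)
    (X : CellFam C) (Y : CellFam D)
    (hXY : ∀ {a b c d : C.Obj} {h : C.Hor a b} {k : C.Hor c d} {u : C.Ver a c}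
      {v : C.Ver b d} (α : C.Cell h k u v), X α → Y (F.cell α))
    {a b c d : C.Obj} {h : C.Hor a b} {k : C.Hor c d} {u : C.Ver a c}
    {v : C.Ver b d} {α : C.Cell h k u v} (hα : HorGen C X α) :
    HorGen D Y (F.cell α) := by
  induction hα with
  | of hx => exact HorGen.of (hXY _ hx)
  | comp hα hβ ihα ihβ =>
    exact cellFam_cast (HorGen D Y) (F.hor_comp _ _).symm (F.hor_comp _ _).symm
      rfl rfl (F.cell_hcomp _ _).symm (HorGen.comp ihα ihβ)

lemma hfam_pres {C D : PreDouble} (F : DoubleFunctor C D) :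
    ∀ (n : ℕ) {a b c d : C.Obj} {h : C.Hor a b} {k : C.Hor c d} {u : C.Ver a c}
      {v : C.Ver b d} (α : C.Cell h k u v), Hfam C n α → Hfam D n (F.cell α)
  | 0, _, _, _, _, _, _, _, _, α, hα => hfam_zero_pres F α hα
  | n + 1, _, _, _, _, _, _, _, _, α, hα =>
    horGen_pres F _ _
      (fun _ hβ => vertGen_pres F _ _ (fun β hβ' => hfam_pres F n β hβ') hβ) hα

/-- A double functor `F : C → D` between globularily generated
double categories maps the `n`-th vertical category of `C` into the `n`-th
vertical category of `D`; if moreover `C` and `D` (and `F`, which here is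
strict) are strict, it maps the `n`-th horizontal category of `C` into the
`n`-th horizontal category of `D`. -/
theorem doubleFunctor_preserves_filtration {C D : PreDouble}
    (F : DoubleFunctor C D) (hC : GloballyGenerated C)
    (hD : GloballyGenerated D) :
    (∀ (n : ℕ) {a b c d : C.Obj} {h : C.Hor a b} {k : C.Hor c d}
      {u : C.Ver a c} {v : C.Ver b d} (α : C.Cell h k u v),
      Vfam C n α → Vfam D n (F.cell α)) ∧
    (IsStrict C → IsStrict D →
      ∀ (n : ℕ) {a b c d : C.Obj} {h : C.Hor a b} {k : C.Hor c d}
        {u : C.Ver a c} {v : C.Ver b d} (α : C.Cell h k u v),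
        Hfam C (n + 1) α → Hfam D (n + 1) (F.cell α)) := by
  refine ⟨fun n _ _ _ _ _ _ _ _ α hα =>
    vertGen_pres F _ _ (fun β hβ => hfam_pres F n β hβ) hα,
    fun _ _ n _ _ _ _ _ _ _ _ α hα => hfam_pres F (n + 1) α hα⟩
end
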